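/- (Abstract Kummer congruence criterion) Let {f_i} be a dense system of continuous functions in C(Z_p^×, O_{C_p}) and {a_i} ⊂ O_{C_p} a system of elements. Then there exists a p-adic measure μ : C(Z_p^×, O_{C_p}) → O_{C_p} with ∫ f_i dμ = a_i for all i if and only if the following Kummer congruences hold: for every choice of elements b_i ∈ C_p, almost all zero, if Σ_i b_i f_i(y) ∈ p^m O_{C_p} for all y ∈ Z_p^×, then Σ_i b_i a_i ∈ p^m O_{C_p}. -/

import Mathlib

/-! The Kummer congruences for all `m` are the rescalings, by powers of `p`, of the single
condition that `b ↦ Σ bᵢ aᵢ` maps the unit ball of `b ↦ ‖Σ bᵢ fᵢ‖_∞` into the unit ball of `K`.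
Such a functional is bounded by `p` times that seminorm, so it factors through the dense span of
the `fᵢ` and extends continuously to `C(ℤ_p^×, K)`. Since the sup norm is ultrametric, the closed
unit ball is open, the span is dense in it, and the extension still maps it into the unit ball. -/

open Metric

theorem Dense.norm_le_one_of_forall_mem {E F : Type*} [NormedAddCommGroup E] [IsUltrametricDist E]
    [SeminormedAddCommGroup F] {S : Set E} (hS : Dense S) {μ : E → F} (hμ : Continuous μ)
    (h : ∀ x ∈ S, ‖x‖ ≤ 1 → ‖μ x‖ ≤ 1) {x : E} (hx : ‖x‖ ≤ 1) : ‖μ x‖ ≤ 1 := by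
  have hball : closedBall (0 : E) 1 ⊆ closure (closedBall 0 1 ∩ S) :=
    hS.open_subset_closure_inter (IsUltrametricDist.isOpen_closedBall 0 one_ne_zero)
  have hclosure : closure (closedBall (0 : E) 1 ∩ S) ⊆ μ ⁻¹' closedBall 0 1 :=
    closure_minimal (fun y ⟨hy, hyS⟩ => by simpa using h y hyS (by simpa using hy))
      (isClosed_closedBall.preimage hμ)
  simpa using hclosure (hball (by simpa using hx))

namespace LinearMap

variable {K V E F : Type*} [NontriviallyNormedField K] [AddCommGroup V] [Module K V]
  [NormedAddCommGroup E] [NormedSpace K E] [NormedAddCommGroup F] [NormedSpace K F]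
  {T : V →ₗ[K] E} {A : V →ₗ[K] F}

theorem map_eq_zero_of_unit_ball_bound (h : ∀ v, ‖T v‖ ≤ 1 → ‖A v‖ ≤ 1) {v : V}
    (hv : T v = 0) : A v = 0 := by
  by_contra hAv
  obtain ⟨s, hs⟩ := NormedField.exists_lt_norm K ‖A v‖⁻¹
  have hsv : ‖s‖ * ‖A v‖ ≤ 1 := by simpa [hv, norm_smul] using h (s • v)
  have := (inv_lt_iff_one_lt_mul₀ (norm_pos_iff.2 hAv)).1 hs
  linarith

theorem norm_le_of_unit_ball_bound (h : ∀ v, ‖T v‖ ≤ 1 → ‖A v‖ ≤ 1) (t : K) {v : V}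
    (hv : ‖T v‖ ≤ ‖t‖) : ‖A v‖ ≤ ‖t‖ := by
  rcases eq_or_ne t 0 with rfl | ht
  · rw [norm_zero, norm_le_zero_iff] at hv ⊢
    exact map_eq_zero_of_unit_ball_bound h hv
  · have ht' : 0 < ‖t‖ := norm_pos_iff.2 ht
    simpa [norm_smul, inv_mul_le_iff₀ ht'] using
      h (t⁻¹ • v) (by simpa [norm_smul, inv_mul_le_iff₀ ht'] using hv)

theorem norm_le_mul_of_unit_ball_bound (h : ∀ v, ‖T v‖ ≤ 1 → ‖A v‖ ≤ 1) {c : K}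
    (hc : 1 < ‖c‖) (v : V) : ‖A v‖ ≤ ‖c‖ * ‖T v‖ := by
  rcases eq_or_ne (T v) 0 with hv | hv
  · simp [hv, map_eq_zero_of_unit_ball_bound h hv]
  obtain ⟨d, hd, hdv, -, hd_le⟩ := rescale_to_shell hc one_pos hv
  have hAdv : ‖d‖ * ‖A v‖ ≤ 1 := by
    simpa [norm_smul] using h (d • v) (by simpa [norm_smul] using hdv.le)
  calc ‖A v‖ ≤ ‖d‖⁻¹ := by
        simpa only [mul_one] using (le_inv_mul_iff₀ (norm_pos_iff.2 hd)).2 hAdv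
    _ ≤ ‖c‖ * ‖T v‖ := by simpa using hd_le

theorem exists_unit_ball_bound_comp_eq_iff [IsUltrametricDist E] [CompleteSpace F]
    (hT : DenseRange T) :
    (∃ μ : E →ₗ[K] F, (∀ g, ‖g‖ ≤ 1 → ‖μ g‖ ≤ 1) ∧ μ ∘ₗ T = A) ↔
      ∀ v, ‖T v‖ ≤ 1 → ‖A v‖ ≤ 1 := by
  refine ⟨fun ⟨μ, hμ, hμT⟩ v hv => hμT ▸ hμ (T v) hv, fun h => ?_⟩
  obtain ⟨c, hc⟩ := NormedField.exists_one_lt_norm K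
  have hbound : ∃ C, ∀ v, ‖A v‖ ≤ C * ‖T v‖ := ⟨‖c‖, norm_le_mul_of_unit_ball_bound h hc⟩
  have hμT : ∀ v, A.extendOfNorm T (T v) = A v := extendOfNorm_eq hT hbound
  refine ⟨(A.extendOfNorm T).toLinearMap, fun g hg => ?_, LinearMap.ext hμT⟩
  refine hT.norm_le_one_of_forall_mem (A.extendOfNorm T).continuous ?_ hg
  rintro _ ⟨v, rfl⟩ hv
  rw [hμT]
  exact h v hv

end LinearMap

theorem stmt10_general (p : ℕ) [Fact p.Prime] {K : Type*} [NormedField K]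
    [IsUltrametricDist K] [CompleteSpace K] [Algebra ℚ_[p] K]
    (hnorm : ∀ x : ℚ_[p], ‖algebraMap ℚ_[p] K x‖ = ‖x‖)
    {I : Type*} (f : I → C(ℤ_[p]ˣ, K)) (a : I → K)
    (hdense : Dense (↑(Submodule.span K (Set.range f)) : Set C(ℤ_[p]ˣ, K))) :
    (∃ μ : C(ℤ_[p]ˣ, K) →ₗ[K] K,
        (∀ g : C(ℤ_[p]ˣ, K), (∀ x, ‖g x‖ ≤ 1) → ‖μ g‖ ≤ 1) ∧ ∀ i, μ (f i) = a i)
    ↔ (∀ (m : ℕ) (b : I →₀ K),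
        (∀ y : ℤ_[p]ˣ, ‖∑ i ∈ b.support, b i * f i y‖ ≤ (p : ℝ) ^ (-(m : ℤ))) →
        ‖∑ i ∈ b.support, b i * a i‖ ≤ (p : ℝ) ^ (-(m : ℤ))) := by
  have hpow (m : ℕ) : ‖algebraMap ℚ_[p] K (p ^ m)‖ = (p : ℝ) ^ (-(m : ℤ)) := by
    rw [hnorm, Padic.norm_p_pow]
  let : NontriviallyNormedField K := .ofNormNeOne ⟨algebraMap ℚ_[p] K p,
    norm_ne_zero_iff.1 (by rw [hnorm, Padic.norm_p]; exact inv_ne_zero (mod_cast NeZero.ne p)),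
    by rw [hnorm]; exact Padic.norm_p_lt_one.ne⟩
  set T := Finsupp.linearCombination K f
  set A := Finsupp.linearCombination K a
  have hT (b : I →₀ K) (y : ℤ_[p]ˣ) : T b y = ∑ i ∈ b.support, b i * f i y := by
    simp [T, Finsupp.linearCombination_apply, Finsupp.sum]
  have hA (b : I →₀ K) : A b = ∑ i ∈ b.support, b i * a i := by
    simp [A, Finsupp.linearCombination_apply, Finsupp.sum]
  have hcomp (μ : C(ℤ_[p]ˣ, K) →ₗ[K] K) : (∀ i, μ (f i) = a i) ↔ μ ∘ₗ T = A := by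
    refine ⟨fun h => Finsupp.lhom_ext' fun i => ?_, fun h i => ?_⟩
    · ext; simp [T, A, h]
    · simpa [T, A] using LinearMap.congr_fun h (Finsupp.single i 1)
  have hcong (m : ℕ) (b : I →₀ K) : (∀ y, ‖∑ i ∈ b.support, b i * f i y‖ ≤ (p : ℝ) ^ (-(m : ℤ)))
      ↔ ‖T b‖ ≤ (p : ℝ) ^ (-(m : ℤ)) := by
    rw [ContinuousMap.norm_le _ (by positivity)]
    simp only [hT]
  have hTdense : DenseRange T := by
    rwa [DenseRange, ← LinearMap.coe_range, Finsupp.range_linearCombination]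
  calc _ ↔ ∃ μ : C(ℤ_[p]ˣ, K) →ₗ[K] K, (∀ g, ‖g‖ ≤ 1 → ‖μ g‖ ≤ 1) ∧ μ ∘ₗ T = A := by
        simp only [ContinuousMap.norm_le _ zero_le_one, hcomp]
    _ ↔ ∀ b, ‖T b‖ ≤ 1 → ‖A b‖ ≤ 1 := LinearMap.exists_unit_ball_bound_comp_eq_iff hTdense
    _ ↔ ∀ (m : ℕ) b, ‖T b‖ ≤ (p : ℝ) ^ (-(m : ℤ)) → ‖A b‖ ≤ (p : ℝ) ^ (-(m : ℤ)) :=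
        ⟨fun h m b => hpow m ▸ LinearMap.norm_le_of_unit_ball_bound h _,
          fun h b => by simpa using h 0 b⟩
    _ ↔ _ := by simp only [hcong, hA]

/-- **abstract Kummer congruence criterion.** Let `{f_i}` be a dense
system of `O`-valued continuous functions in `C(ℤ_p^×, O_{ℂ_p})` and `{a_i} ⊆ O_{ℂ_p}`.
There exists a bounded `p`-adic measure `μ` (an `O`-bounded linear functional on
`C(ℤ_p^×, ℂ_p)`) with `∫ f_i dμ = a_i` for all `i` if and only if the Kummer
congruences hold: for every family `b_i ∈ ℂ_p`, almost all zero, if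
`Σ b_i f_i(y) ∈ p^m O` for all `y ∈ ℤ_p^×` then `Σ b_i a_i ∈ p^m O`.
Here `K` plays the role of `ℂ_p`: a complete algebraically closed nonarchimedean
valued extension of `ℚ_p`. -/
theorem stmt10 (p : ℕ) [Fact p.Prime] {K : Type*} [NormedField K]
    [IsUltrametricDist K] [CompleteSpace K] [Algebra ℚ_[p] K]
    (halg : IsAlgClosed K)
    (hnorm : ∀ x : ℚ_[p], ‖algebraMap ℚ_[p] K x‖ = ‖x‖)
    {I : Type*} (f : I → C(ℤ_[p]ˣ, K)) (a : I → K)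
    (hf1 : ∀ i x, ‖f i x‖ ≤ 1) (ha1 : ∀ i, ‖a i‖ ≤ 1)
    (hdense : Dense (↑(Submodule.span K (Set.range f)) : Set C(ℤ_[p]ˣ, K))) :
    (∃ μ : C(ℤ_[p]ˣ, K) →ₗ[K] K,
        (∀ g : C(ℤ_[p]ˣ, K), (∀ x, ‖g x‖ ≤ 1) → ‖μ g‖ ≤ 1) ∧ ∀ i, μ (f i) = a i)
    ↔ (∀ (m : ℕ) (b : I →₀ K),
        (∀ y : ℤ_[p]ˣ, ‖∑ i ∈ b.support, b i * f i y‖ ≤ (p : ℝ) ^ (-(m : ℤ))) →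
        ‖∑ i ∈ b.support, b i * a i‖ ≤ (p : ℝ) ^ (-(m : ℤ))) :=
  stmt10_general p hnorm f a hdense
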